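/- For every integer d ≥ 2 and every μ ∈ ℂ, s^{d−1}·I₀(μ,s) converges to (d−2)! as s → 0⁺. -/

import Mathlib

/-!
Substituting `t = s r` turns `s^(d-1) I₀(μ,s)` into
`∫_{0}^{h/s} (s / sinh (s r))^d exp(-s coth (s r) + μ s r) dr`. As `s → 0⁺` the integrand tends
to `r^(-d) e^(-1/r)`, and since `x ≤ sinh x ≤ x cosh x` for `x ≥ 0` it is dominated by
`e^(|μ| h) r^(-d) e^(-1/r)`. Dominated convergence finishes the proof, because the substitution
`r ↦ 1/r` turns `∫_0^∞ r^(-d) e^(-1/r) dr` into Euler's integral for `Γ(d-1) = (d-2)!`.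
-/

open MeasureTheory

noncomputable def hconst : ℝ := (1/2) * Real.log (5/3)

noncomputable def cothR (t : ℝ) : ℝ := Real.cosh t / Real.sinh t

noncomputable def I0 (d : ℕ) (μ : ℂ) (s : ℝ) : ℂ :=
  ∫ t in Set.Ioo (0:ℝ) hconst,
    Complex.exp (-(s:ℂ) * (cothR t : ℂ) + μ * (t:ℂ)) / ((Real.sinh t : ℂ))^d

open Set Filter Topology Real

theorem Real.sinh_le_mul_cosh {x : ℝ} (hx : 0 ≤ x) : sinh x ≤ x * cosh x := by
  have hmono : MonotoneOn (fun y => y * cosh y - sinh y) (Ici 0) := by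
    refine monotoneOn_of_deriv_nonneg (convex_Ici 0) (by fun_prop) (by fun_prop) fun y hy => ?_
    rw [interior_Ici] at hy
    have hderiv : HasDerivAt (fun y => y * cosh y - sinh y)
        (1 * cosh y + y * sinh y - cosh y) y :=
      ((hasDerivAt_id' y).mul (hasDerivAt_cosh y)).sub (hasDerivAt_sinh y)
    rw [hderiv.deriv]
    linarith [mul_nonneg hy.le (sinh_nonneg_iff.2 hy.le)]
  simpa using hmono self_mem_Ici hx hx

theorem Real.tendsto_div_sinh_mul {r : ℝ} (hr : r ≠ 0) :
    Tendsto (fun s => s / sinh (s * r)) (𝓝[≠] 0) (𝓝 r⁻¹) := by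
  have hslope : Tendsto (fun t => t⁻¹ * sinh t) (𝓝[≠] 0) (𝓝 1) := by
    simpa using hasDerivAt_iff_tendsto_slope_zero.1 (hasDerivAt_sinh 0)
  have hmul : Tendsto (fun s => s * r) (𝓝[≠] 0) (𝓝[≠] 0) :=
    tendsto_nhdsWithin_of_tendsto_nhds_of_eventually_within _
      ((continuous_mul_const r).tendsto' 0 0 (zero_mul r) |>.mono_left nhdsWithin_le_nhds)
      (eventually_nhdsWithin_of_forall fun s hs => mul_ne_zero hs hr)
  convert ((hslope.comp hmul).inv₀ one_ne_zero).const_mul r⁻¹ using 1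
  · ext s; simp only [Function.comp_apply, mul_inv, inv_inv]; field_simp
  · simp

theorem div_sinh_mul_le_inv {s r : ℝ} (hs : 0 < s) (hr : 0 < r) : s / sinh (s * r) ≤ r⁻¹ := by
  have hsr := mul_pos hs hr
  rw [div_le_iff₀ (sinh_pos_iff.2 hsr), ← div_eq_inv_mul, le_div_iff₀ hr]
  exact (self_lt_sinh_iff.2 hsr).le

theorem inv_le_mul_cothR {s r : ℝ} (hs : 0 < s) (hr : 0 < r) : r⁻¹ ≤ s * cothR (s * r) := by
  have hsr := mul_pos hs hr
  rw [cothR, mul_div_assoc', le_div_iff₀ (sinh_pos_iff.2 hsr), ← div_eq_inv_mul, div_le_iff₀ hr]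
  linarith [sinh_le_mul_cosh hsr.le]

theorem rpow_neg_one_subst_gammaIntegrand {a x : ℝ} (hx : 0 < x) :
    (|(-1 : ℝ)| * x ^ ((-1 : ℝ) - 1)) • (exp (-x ^ (-1 : ℝ)) * (x ^ (-1 : ℝ)) ^ (a - 1 - 1)) =
      exp (-x⁻¹) * x ^ (-a) := by
  rw [smul_eq_mul, rpow_neg_one, inv_rpow hx.le, ← rpow_neg hx.le, abs_neg, abs_one, one_mul,
    mul_left_comm, ← rpow_add hx]
  ring_nf

theorem integrableOn_exp_neg_inv_mul_rpow_neg {a : ℝ} (ha : 1 < a) :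
    IntegrableOn (fun x => exp (-x⁻¹) * x ^ (-a)) (Ioi 0) :=
  ((integrableOn_Ioi_comp_rpow_iff _ (by norm_num : (-1:ℝ) ≠ 0)).2
    (GammaIntegral_convergent (by linarith : 0 < a - 1))).congr_fun
    (fun _ hx => rpow_neg_one_subst_gammaIntegrand hx) measurableSet_Ioi

theorem integral_exp_neg_inv_mul_rpow_neg {a : ℝ} (ha : 1 < a) :
    ∫ x in Ioi 0, exp (-x⁻¹) * x ^ (-a) = Gamma (a - 1) := by
  rw [Gamma_eq_integral (by linarith),
    ← integral_comp_rpow_Ioi (fun y => exp (-y) * y ^ (a - 1 - 1)) (by norm_num : (-1:ℝ) ≠ 0)]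
  exact setIntegral_congr_fun measurableSet_Ioi fun _ hx =>
    (rpow_neg_one_subst_gammaIntegrand hx).symm

theorem exp_neg_inv_div_pow_eqOn (d : ℕ) :
    EqOn (fun x => exp (-x⁻¹) * x ^ (-(d : ℝ))) (fun x => exp (-x⁻¹) / x ^ d) (Ioi 0) :=
  fun x hx => by simp only [rpow_neg (le_of_lt hx), rpow_natCast, div_eq_mul_inv]

theorem integrableOn_exp_neg_inv_div_pow {d : ℕ} (hd : 2 ≤ d) :
    IntegrableOn (fun x => exp (-x⁻¹) / x ^ d) (Ioi 0) :=
  (integrableOn_exp_neg_inv_mul_rpow_neg (by exact_mod_cast hd)).congr_fun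
    (exp_neg_inv_div_pow_eqOn d) measurableSet_Ioi

theorem integral_exp_neg_inv_div_pow {d : ℕ} (hd : 2 ≤ d) :
    ∫ x in Ioi 0, exp (-x⁻¹) / x ^ d = (d - 2).factorial := by
  rw [← setIntegral_congr_fun measurableSet_Ioi (exp_neg_inv_div_pow_eqOn d),
    integral_exp_neg_inv_mul_rpow_neg (by exact_mod_cast hd), ← Gamma_nat_eq_factorial]
  congr 1
  push_cast [Nat.cast_sub hd]
  ring

noncomputable def I0Integrand (d : ℕ) (μ : ℂ) (s t : ℝ) : ℂ :=
  Complex.exp (-(s:ℂ) * (cothR t : ℂ) + μ * (t:ℂ)) / ((Real.sinh t : ℂ))^d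

noncomputable def rescaledI0Integrand (d : ℕ) (μ : ℂ) (s r : ℝ) : ℂ :=
  (s:ℂ)^d * (Iio hconst).indicator (I0Integrand d μ s) (s * r)

theorem hconst_pos : 0 < hconst := by
  unfold hconst; have := Real.log_pos (by norm_num : (1:ℝ) < 5/3); positivity

section

variable {d : ℕ} {μ : ℂ}

theorem pow_mul_I0_eq_integral_rescaledI0Integrand (hd : 1 ≤ d) {s : ℝ} (hs : 0 < s) :
    (s:ℂ)^(d-1) * I0 d μ s = ∫ r in Ioi 0, rescaledI0Integrand d μ s r := by
  have hI0 : I0 d μ s = ∫ t in Ioi 0, (Iio hconst).indicator (I0Integrand d μ s) t := by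
    rw [setIntegral_indicator measurableSet_Iio, Ioi_inter_Iio]; rfl
  have hscale := integral_comp_mul_left_Ioi ((Iio hconst).indicator (I0Integrand d μ s)) 0 hs
  rw [mul_zero] at hscale
  obtain ⟨k, rfl⟩ : ∃ k, d = k + 1 := ⟨d - 1, by omega⟩
  have hs' : (s:ℂ) ≠ 0 := by exact_mod_cast hs.ne'
  simp only [rescaledI0Integrand, integral_const_mul, hscale, ← hI0, Complex.real_smul]
  push_cast
  field_simp
  ring

theorem rescaledI0Integrand_of_mul_lt {s r : ℝ} (h : s * r < hconst) :
    rescaledI0Integrand d μ s r = ((s / sinh (s * r)) ^ d : ℝ) *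
      Complex.exp ((-(s * cothR (s * r)) : ℝ) + μ * (s * r : ℝ)) := by
  rw [rescaledI0Integrand, indicator_of_mem (mem_Iio.2 h), I0Integrand]
  push_cast
  rw [neg_mul, div_pow]
  ring

theorem measurable_rescaledI0Integrand (s : ℝ) : Measurable (rescaledI0Integrand d μ s) := by
  unfold rescaledI0Integrand I0Integrand cothR
  have := measurableSet_Iio (a := hconst)
  fun_prop

theorem norm_rescaledI0Integrand_le {s r : ℝ} (hs : 0 < s) (hr : 0 < r) :
    ‖rescaledI0Integrand d μ s r‖ ≤ exp (‖μ‖ * hconst) * (exp (-r⁻¹) / r ^ d) := by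
  by_cases h : s * r < hconst
  swap
  · rw [rescaledI0Integrand, indicator_of_notMem (by simpa using h), mul_zero, norm_zero]
    positivity
  rw [rescaledI0Integrand_of_mul_lt h, norm_mul, Complex.norm_exp, Complex.norm_real,
    norm_of_nonneg (by have := sinh_pos_iff.2 (mul_pos hs hr); positivity)]
  have hre : μ.re * (s * r) ≤ ‖μ‖ * hconst :=
    (le_abs_self _).trans <| by
      rw [abs_mul, abs_of_pos (mul_pos hs hr)]
      exact mul_le_mul (Complex.abs_re_le_norm μ) h.le (mul_pos hs hr).le (norm_nonneg μ)
  calc (s / sinh (s * r)) ^ d * exp ((↑(-(s * cothR (s * r))) + μ * ↑(s * r)).re)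
      ≤ r⁻¹ ^ d * exp (-r⁻¹ + ‖μ‖ * hconst) := by
        simp only [Complex.add_re, Complex.ofReal_re, Complex.re_mul_ofReal]
        gcongr
        · exact div_sinh_mul_le_inv hs hr
        · linarith [inv_le_mul_cothR hs hr]
    _ = exp (‖μ‖ * hconst) * (exp (-r⁻¹) / r ^ d) := by
        rw [exp_add, inv_pow]; ring

theorem tendsto_rescaledI0Integrand {r : ℝ} (hr : 0 < r) :
    Tendsto (fun s => rescaledI0Integrand d μ s r) (𝓝[>] 0) (𝓝 ↑(exp (-r⁻¹) / r ^ d)) := by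
  have hdiv : Tendsto (fun s => s / sinh (s * r)) (𝓝[>] 0) (𝓝 r⁻¹) :=
    (tendsto_div_sinh_mul hr.ne').mono_left (nhdsWithin_mono _ fun s hs => ne_of_gt hs)
  have hmul : Tendsto (fun s => s * r) (𝓝[>] 0) (𝓝 0) :=
    ((continuous_mul_const r).tendsto' 0 0 (zero_mul r)).mono_left nhdsWithin_le_nhds
  have hcoth : Tendsto (fun s => s * cothR (s * r)) (𝓝[>] 0) (𝓝 r⁻¹) := by
    have hcosh := (continuous_cosh.tendsto 0).comp hmul
    rw [Function.comp_def, cosh_zero] at hcosh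
    refine (one_mul r⁻¹ ▸ hcosh.mul hdiv).congr fun s => ?_
    rw [cothR]
    ring
  have hlim := ((hdiv.pow d).ofReal).mul
    ((hcoth.neg.ofReal.add (hmul.ofReal.const_mul μ)).cexp)
  convert hlim.congr' ?_ using 2
  · push_cast; simp [div_eq_mul_inv, mul_comm]
  · filter_upwards [Ioo_mem_nhdsGT (div_pos hconst_pos hr)] with s hs
    exact (rescaledI0Integrand_of_mul_lt ((lt_div_iff₀ hr).1 hs.2)).symm

end

theorem stmt7 (d : ℕ) (hd : 2 ≤ d) (μ : ℂ) :
    Filter.Tendsto (fun s : ℝ => ((s:ℂ))^(d-1) * I0 d μ s)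
      (nhdsWithin 0 (Set.Ioi 0)) (nhds ((Nat.factorial (d-2) : ℂ))) := by
  have hdom := tendsto_integral_filter_of_dominated_convergence
    (μ := volume.restrict (Ioi 0)) (l := 𝓝[>] 0) (F := rescaledI0Integrand d μ)
    (fun r => exp (‖μ‖ * hconst) * (exp (-r⁻¹) / r ^ d))
    (.of_forall fun s => (measurable_rescaledI0Integrand s).aestronglyMeasurable)
    (eventually_mem_nhdsWithin.mono fun _ hs => (ae_restrict_iff' measurableSet_Ioi).2 <|
      .of_forall fun _ hr => norm_rescaledI0Integrand_le hs hr)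
    ((integrableOn_exp_neg_inv_div_pow hd).const_mul _)
    ((ae_restrict_iff' measurableSet_Ioi).2 <| .of_forall fun _ hr =>
      tendsto_rescaledI0Integrand hr)
  rw [integral_complex_ofReal, integral_exp_neg_inv_div_pow hd, Complex.ofReal_natCast] at hdom
  refine hdom.congr' ?_
  filter_upwards [self_mem_nhdsWithin] with s hs
  exact (pow_mul_I0_eq_integral_rescaledI0Integrand (by omega) hs).symm
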